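/- arXiv:1809.06831 — 2 statements merged into one kernel-verified Lean document; each statement's English description precedes it below -/
import Mathlib

section
/- In the reduction graph G′, every simple s–t path starting with the edges (s,a),(a,b) either is exactly ⟨(s,a),(a,b),(b,t)⟩ or has the form ⟨(s,a),(a,b),(b,s₁)⟩ · p₁ · ⟨(t₁,c),(c,d),(d,t)⟩ where p₁ is a simple s₁–t₁ path in G. -/
/-!
Call the nodes of `G` old and `s, t, a, b, c, d` fresh. The only edges of `G′` from an old node
to a fresh one are `(t₂, a)` and `(t₁, c)`, and `a` is used by the path at its second step. Hence
after `b → s₁` the path runs through old nodes along edges of `G` until it leaves through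
`(t₁, c)`, and is then forced along `c → d`. From `d` it must go to `t`: going to `s₂` would
re-enter the old nodes, from which the only remaining exit `c` has already been used.
-/

theorem List.exists_eq_append_cons_of_exists_not {α : Type*} {P : α → Prop} :
    ∀ {l : List α}, (∃ x ∈ l, ¬ P x) → ∃ p x q, l = p ++ x :: q ∧ (∀ y ∈ p, P y) ∧ ¬ P x
  | [], ⟨_, hx, _⟩ => absurd hx List.not_mem_nil
  | y :: l, h => by
    by_cases hy : P y
    · obtain ⟨p, x, q, rfl, hp, hx⟩ :=
        exists_eq_append_cons_of_exists_not (by simpa [hy] using h)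
      exact ⟨y :: p, x, q, rfl, by simpa [hy] using hp, hx⟩
    · exact ⟨[], y, l, rfl, by simp, hy⟩

theorem List.IsChain.eq_nil_of_not_rel {α : Type*} {R : α → α → Prop} {x : α} {l : List α}
    (h : (x :: l).IsChain R) (hx : ∀ y ∈ l, ¬ R x y) : l = [] := by
  cases l with
  | nil => rfl
  | cons y l => exact absurd (List.isChain_cons_cons.1 h).1 (hx y (by simp))

section Reduction

variable {V : Type*}

structure IsReductionGraph (E E' : V → V → Prop) (s t a b c d s₁ t₁ s₂ t₂ : V) : Prop where
  notMem_of_adj : ∀ u v, E u v → u ∉ [s, t, a, b, c, d] ∧ v ∉ [s, t, a, b, c, d]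
  adj_iff : ∀ u v, E' u v ↔ E u v ∨ (u, v) ∈
    [(s, a), (s, c), (a, b), (c, d), (b, s₁), (d, s₂), (t₂, a), (t₁, c), (b, t), (d, t)]

namespace IsReductionGraph

variable {E E' : V → V → Prop} {s t a b c d s₁ t₁ s₂ t₂ u v : V}

theorem adj_of_notMem (hG : IsReductionGraph E E' s t a b c d s₁ t₁ s₂ t₂)
    (hu : u ∉ [s, t, a, b, c, d]) (hv : v ∉ [s, t, a, b, c, d]) (h : E' u v) : E u v := by
  refine ((hG.adj_iff u v).1 h).resolve_right ?_
  simp only [List.mem_cons, List.not_mem_nil, or_false, not_or] at hu hv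
  simp only [List.mem_cons, List.not_mem_nil, or_false, Prod.mk.injEq]
  grind

theorem eq_t₁_and_eq_c_of_adj (hG : IsReductionGraph E E' s t a b c d s₁ t₁ s₂ t₂)
    (hu : u ∉ [s, t, a, b, c, d]) (hv : v ∈ [s, t, a, b, c, d]) (hva : v ≠ a) (h : E' u v) :
    u = t₁ ∧ v = c := by
  rcases (hG.adj_iff u v).1 h with h | h
  · exact absurd hv (hG.notMem_of_adj u v h).2
  · simp only [List.mem_cons, List.not_mem_nil, or_false, not_or] at hu
    simp only [List.mem_cons, List.not_mem_nil, or_false, Prod.mk.injEq] at h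
    grind

theorem mem_of_adj_of_mem (hG : IsReductionGraph E E' s t a b c d s₁ t₁ s₂ t₂)
    (hu : u ∈ [s, t, a, b, c, d]) (h : E' u v) :
    (u, v) ∈ [(s, a), (s, c), (a, b), (c, d), (b, s₁), (d, s₂), (t₂, a), (t₁, c), (b, t), (d, t)] :=
  ((hG.adj_iff u v).1 h).resolve_left fun hE => (hG.notMem_of_adj u v hE).1 hu

theorem not_adj_t (hG : IsReductionGraph E E' s t a b c d s₁ t₁ s₂ t₂)
    (hnd : [s, t, a, b, c, d].Nodup) (ht₁ : t₁ ∉ [s, t, a, b, c, d]) (hva : v ≠ a) :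
    ¬ E' t v := fun h => by
  have := hG.mem_of_adj_of_mem (by simp) h
  simp only [List.nodup_cons, List.mem_cons, List.not_mem_nil, or_false, not_or,
    Prod.mk.injEq] at hnd ht₁ this
  grind

theorem eq_d_of_adj_c (hG : IsReductionGraph E E' s t a b c d s₁ t₁ s₂ t₂)
    (hnd : [s, t, a, b, c, d].Nodup) (ht₁ : t₁ ∉ [s, t, a, b, c, d]) (hva : v ≠ a)
    (h : E' c v) : v = d := by
  have := hG.mem_of_adj_of_mem (by simp) h
  simp only [List.nodup_cons, List.mem_cons, List.not_mem_nil, or_false, not_or,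
    Prod.mk.injEq] at hnd ht₁ this
  grind

theorem eq_s₂_or_t_of_adj_d (hG : IsReductionGraph E E' s t a b c d s₁ t₁ s₂ t₂)
    (hnd : [s, t, a, b, c, d].Nodup) (ht₁ : t₁ ∉ [s, t, a, b, c, d]) (hva : v ≠ a)
    (h : E' d v) : v = s₂ ∨ v = t := by
  have := hG.mem_of_adj_of_mem (by simp) h
  simp only [List.nodup_cons, List.mem_cons, List.not_mem_nil, or_false, not_or,
    Prod.mk.injEq] at hnd ht₁ this
  grind

theorem eq_s₁_or_t_of_adj_b (hG : IsReductionGraph E E' s t a b c d s₁ t₁ s₂ t₂)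
    (hnd : [s, t, a, b, c, d].Nodup) (ht₁ : t₁ ∉ [s, t, a, b, c, d]) (hva : v ≠ a)
    (h : E' b v) : v = s₁ ∨ v = t := by
  have := hG.mem_of_adj_of_mem (by simp) h
  simp only [List.nodup_cons, List.mem_cons, List.not_mem_nil, or_false, not_or,
    Prod.mk.injEq] at hnd ht₁ this
  grind

theorem exists_eq_append_c_of_isChain (hG : IsReductionGraph E E' s t a b c d s₁ t₁ s₂ t₂)
    {m : List V} (hu : u ∉ [s, t, a, b, c, d]) (hch : (u :: m).IsChain E') (ha : a ∉ u :: m)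
    (hexit : ∃ x ∈ u :: m, x ∈ [s, t, a, b, c, d]) :
    ∃ p q, u :: m = p ++ c :: q ∧ p.IsChain E ∧ p.head? = some u ∧ p.getLast? = some t₁ := by
  obtain ⟨p, x, q, hsplit, hp, hx⟩ :=
    List.exists_eq_append_cons_of_exists_not (l := u :: m)
      (P := (· ∉ [s, t, a, b, c, d])) (by simpa only [not_not] using hexit)
  obtain ⟨y, p', rfl⟩ : ∃ y p', p = y :: p' := by
    cases p with
    | nil => exact absurd (List.cons_eq_cons.1 hsplit).1 (by rintro rfl; exact hx hu)
    | cons y p' => exact ⟨y, p', rfl⟩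
  obtain ⟨rfl, -⟩ := List.cons_eq_cons.1 hsplit
  rw [hsplit, List.isChain_append] at hch
  obtain ⟨hpch, -, hlink⟩ := hch
  obtain ⟨z, hz⟩ := Option.isSome_iff_exists.1 (by simp : ((u :: p').getLast?).isSome)
  have hxa : x ≠ a := by rintro rfl; exact ha (by simp [hsplit])
  obtain ⟨rfl, rfl⟩ := hG.eq_t₁_and_eq_c_of_adj (hp z (List.mem_of_getLast? hz))
    (not_not.1 hx) hxa (hlink z hz x rfl)
  exact ⟨u :: p', q, hsplit,
    hpch.imp_of_mem_imp fun y z hy hz => hG.adj_of_notMem (hp y hy) (hp z hz), rfl, hz⟩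

theorem eq_d_t_of_isChain_c (hG : IsReductionGraph E E' s t a b c d s₁ t₁ s₂ t₂)
    (hnd : [s, t, a, b, c, d].Nodup) (ht₁ : t₁ ∉ [s, t, a, b, c, d])
    (hs₂ : s₂ ∉ [s, t, a, b, c, d]) {q : List V} (hch : (c :: q).IsChain E')
    (hnodup : (c :: q).Nodup) (ha : a ∉ q) (hlast : (c :: q).getLast? = some t) : q = [d, t] := by
  have hct : c ≠ t := by grind
  have hdt : d ≠ t := by grind
  rcases q with _ | ⟨y, q⟩
  · exact absurd (by simpa using hlast) hct
  rw [List.isChain_cons_cons] at hch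
  obtain rfl := hG.eq_d_of_adj_c hnd ht₁ (by rintro rfl; simp at ha) hch.1
  rcases q with _ | ⟨z, q⟩
  · exact absurd (by simpa using hlast) hdt
  rw [List.isChain_cons_cons] at hch
  rcases hG.eq_s₂_or_t_of_adj_d hnd ht₁ (by rintro rfl; simp at ha) hch.2.1 with rfl | rfl
  · obtain ⟨p, r, hsplit, -⟩ := hG.exists_eq_append_c_of_isChain hs₂ hch.2.2
      (fun h => ha (by simp [h])) ⟨t, List.mem_of_getLast? (by simpa using hlast), by simp⟩
    exact absurd (by simp [hsplit]) (List.nodup_cons.1 hnodup).1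
  · rw [hch.2.2.eq_nil_of_not_rel fun v hv => hG.not_adj_t hnd ht₁ (by rintro rfl; simp_all)]

theorem eq_t_or_exists_path_of_isChain_b (hG : IsReductionGraph E E' s t a b c d s₁ t₁ s₂ t₂)
    (hnd : [s, t, a, b, c, d].Nodup) (hs₁ : s₁ ∉ [s, t, a, b, c, d])
    (ht₁ : t₁ ∉ [s, t, a, b, c, d]) (hs₂ : s₂ ∉ [s, t, a, b, c, d]) {q : List V}
    (hch : (b :: q).IsChain E') (hnodup : (b :: q).Nodup) (ha : a ∉ q)
    (hlast : (b :: q).getLast? = some t) :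
    q = [t] ∨ ∃ p₁ : List V, p₁.IsChain E ∧ p₁.Nodup ∧ p₁.head? = some s₁ ∧
      p₁.getLast? = some t₁ ∧ q = p₁ ++ [c, d, t] := by
  rcases q with _ | ⟨x, q⟩
  · have hbt : b ≠ t := by grind
    exact absurd (by simpa using hlast) hbt
  rw [List.isChain_cons_cons] at hch
  rcases hG.eq_s₁_or_t_of_adj_b hnd ht₁ (by rintro rfl; simp at ha) hch.1 with rfl | rfl
  · right
    rw [List.getLast?_cons_cons] at hlast
    obtain ⟨p₁, r, hsplit, hp₁, hhead, hlast₁⟩ := hG.exists_eq_append_c_of_isChain hs₁ hch.2 ha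
      ⟨t, List.mem_of_getLast? hlast, by simp⟩
    rw [hsplit] at hch hnodup ha hlast
    rw [List.getLast?_append_cons] at hlast
    have hnodup' := List.nodup_append.1 hnodup.of_cons
    have hr := hG.eq_d_t_of_isChain_c hnd ht₁ hs₂ (List.isChain_append.1 hch.2).2.1 hnodup'.2.1
      (fun h => ha (by simp [h])) hlast
    exact ⟨p₁, hp₁, hnodup'.1, hhead, hlast₁, by simp [hsplit, hr]⟩
  · left
    rw [hch.2.eq_nil_of_not_rel fun v hv => hG.not_adj_t hnd ht₁ (by rintro rfl; simp_all)]

end IsReductionGraph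
end Reduction

theorem reduction_path_structure_general {V : Type*} (E : V → V → Prop)
    (s t a b c d s₁ t₁ s₂ t₂ : V)
    (hnd : ([s, t, a, b, c, d] : List V).Nodup)
    (hfresh : ∀ u v, E u v →
      u ∉ ([s, t, a, b, c, d] : List V) ∧ v ∉ ([s, t, a, b, c, d] : List V))
    (hs₁ : s₁ ∉ ([s, t, a, b, c, d] : List V)) (ht₁ : t₁ ∉ ([s, t, a, b, c, d] : List V))
    (hs₂ : s₂ ∉ ([s, t, a, b, c, d] : List V))
    (E' : V → V → Prop)
    (hE' : ∀ u v, E' u v ↔ E u v ∨ (u, v) ∈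
      ([(s, a), (s, c), (a, b), (c, d), (b, s₁), (d, s₂), (t₂, a), (t₁, c), (b, t), (d, t)] :
        List (V × V)))
    (l rest : List V) (hl : l = s :: a :: b :: rest)
    (hchain : l.Chain' E') (hnodup : l.Nodup) (hlast : l.getLast? = some t) :
    l = [s, a, b, t] ∨
      ∃ p₁ : List V, p₁.Chain' E ∧ p₁.Nodup ∧ p₁.head? = some s₁ ∧
        p₁.getLast? = some t₁ ∧ l = [s, a, b] ++ p₁ ++ [c, d, t] := by
  subst hl
  have hG : IsReductionGraph E E' s t a b c d s₁ t₁ s₂ t₂ := ⟨hfresh, hE'⟩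
  have ha : a ∉ rest := fun h => (List.nodup_cons.1 hnodup.of_cons).1 (by simp [h])
  rcases hG.eq_t_or_exists_path_of_isChain_b hnd hs₁ ht₁ hs₂ hchain.tail.tail
      hnodup.of_cons.of_cons ha (by simpa using hlast) with
    rfl | ⟨p₁, hp₁, hnodup₁, hhead, hlast₁, rfl⟩
  · exact Or.inl rfl
  · exact Or.inr ⟨p₁, hp₁, hnodup₁, hhead, hlast₁, rfl⟩

/-- In the reduction graph `G′`, every simple `s–t` path starting with the
edges `(s,a),(a,b)` either is exactly `⟨(s,a),(a,b),(b,t)⟩` or has the form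
`⟨(s,a),(a,b),(b,s₁)⟩ · p₁ · ⟨(t₁,c),(c,d),(d,t)⟩` where `p₁` is a simple `s₁–t₁` path
in `G`. Paths are modelled as node lists: a simple path is a `Chain'` of edges with no
repeated node. -/
theorem reduction_path_structure {V : Type*} (E : V → V → Prop)
    (s t a b c d s₁ t₁ s₂ t₂ : V)
    (hnd : ([s, t, a, b, c, d] : List V).Nodup)
    (hfresh : ∀ u v, E u v →
      u ∉ ([s, t, a, b, c, d] : List V) ∧ v ∉ ([s, t, a, b, c, d] : List V))
    (hs₁ : s₁ ∉ ([s, t, a, b, c, d] : List V)) (ht₁ : t₁ ∉ ([s, t, a, b, c, d] : List V))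
    (hs₂ : s₂ ∉ ([s, t, a, b, c, d] : List V)) (ht₂ : t₂ ∉ ([s, t, a, b, c, d] : List V))
    (E' : V → V → Prop)
    (hE' : ∀ u v, E' u v ↔ E u v ∨ (u, v) ∈
      ([(s, a), (s, c), (a, b), (c, d), (b, s₁), (d, s₂), (t₂, a), (t₁, c), (b, t), (d, t)] :
        List (V × V)))
    (l rest : List V) (hl : l = s :: a :: b :: rest)
    (hchain : l.Chain' E') (hnodup : l.Nodup) (hlast : l.getLast? = some t) :
    l = [s, a, b, t] ∨
      ∃ p₁ : List V, p₁.Chain' E ∧ p₁.Nodup ∧ p₁.head? = some s₁ ∧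
        p₁.getLast? = some t₁ ∧ l = [s, a, b] ++ p₁ ++ [c, d, t] :=
  reduction_path_structure_general E s t a b c d s₁ t₁ s₂ t₂ hnd hfresh hs₁ ht₁ hs₂ E' hE' l rest hl
    hchain hnodup hlast
end

section
/- A simple s–t path in the reduction graph G′ that enters G through edge (b,s₁) must exit G through edge (t₁,c): exiting through (t₂,a) would revisit node a and thus create a cycle. -/
/-!
Since `a` is the only in-neighbour of `b`, the path visits `a` just before the edge `(b, s₁)`.
After `s₁` it must return to `{s, t, a, b, c, d}` to reach `t`, and the only edges entering
this set are `(t₂, a)` and `(t₁, c)`; the first would revisit `a`, so `c` is visited after `s₁`.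
An edge `(t₂, a)` would lie before `a`, so the path would have left the set between `s` and
`t₂`, i.e. through `(b, s₁)` (revisiting `b`) or through `(d, s₂)`; but `d` is entered only
from `c`, which comes after `s₁`.
-/

/-- The list of edges (consecutive node pairs) of a path given as a node list. -/
def pathEdges {V : Type*} (l : List V) : List (V × V) := l.zip l.tail

namespace List

variable {V : Type*} {l : List V}

theorem IsChain.rel_of_getElem? {R : V → V → Prop} (hl : l.IsChain R) {i : ℕ} {u v : V}
    (hu : l[i]? = some u) (hv : l[i + 1]? = some v) : R u v := by
  obtain ⟨-, rfl⟩ := getElem?_eq_some_iff.1 hu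
  obtain ⟨hi, rfl⟩ := getElem?_eq_some_iff.1 hv
  exact hl.getElem i hi

theorem IsChain.exists_getElem?_pred {R : V → V → Prop} (hl : l.IsChain R) {x w : V}
    (hpred : ∀ u, R u x → u = w) {k : ℕ} (hk : l[k]? = some x) (h0 : l[0]? ≠ some x) :
    ∃ j, j + 1 = k ∧ l[j]? = some w := by
  obtain _ | j := k
  · exact absurd hk h0
  have hj : j < l.length := by have := (getElem?_eq_some_iff.1 hk).1; omega
  have hjw := getElem?_eq_getElem hj
  exact ⟨j, rfl, hpred _ (hl.rel_of_getElem? hjw hk) ▸ hjw⟩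

theorem Nodup.eq_of_getElem?_eq_some (hl : l.Nodup) {i j : ℕ} {x : V}
    (hi : l[i]? = some x) (hj : l[j]? = some x) : i = j :=
  (getElem?_inj (getElem?_eq_some_iff.1 hi).1 hl).1 (hi.trans hj.symm)

/-- A discrete intermediate value theorem. -/
theorem exists_getElem?_crossing (p : V → Prop) {i j : ℕ} (hij : i ≤ j) {x y : V}
    (hx : l[i]? = some x) (hpx : ¬ p x) (hy : l[j]? = some y) (hpy : p y) :
    ∃ k u v, i ≤ k ∧ k < j ∧ l[k]? = some u ∧ l[k + 1]? = some v ∧ ¬ p u ∧ p v := by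
  induction j generalizing y with
  | zero =>
    obtain rfl : i = 0 := by omega
    exact absurd (Option.some.inj (hx.symm.trans hy) ▸ hpy) hpx
  | succ n ih =>
    obtain rfl | hin := eq_or_lt_of_le hij
    · exact absurd (Option.some.inj (hx.symm.trans hy) ▸ hpy) hpx
    have hn : n < l.length := by have := (getElem?_eq_some_iff.1 hy).1; omega
    have hz : l[n]? = some l[n] := getElem?_eq_getElem hn
    by_cases hpz : p l[n]
    · obtain ⟨k, u, v, hik, hkn, hu, hv, hpu, hpv⟩ := ih (by omega) hz hpz
      exact ⟨k, u, v, hik, by omega, hu, hv, hpu, hpv⟩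
    · exact ⟨n, l[n], y, by omega, by omega, hz, hy, hpz, hpy⟩

end List

theorem mem_pathEdges_iff {V : Type*} {l : List V} {u v : V} :
    (u, v) ∈ pathEdges l ↔ ∃ i, l[i]? = some u ∧ l[i + 1]? = some v := by
  simp only [pathEdges, List.mem_iff_getElem?, List.getElem?_zip_eq_some, List.getElem?_tail]

section ReductionGraph

variable {V : Type*}

def extraNodes (s t a b c d : V) : List V := [s, t, a, b, c, d]

def extraEdges (s t a b c d s₁ t₁ s₂ t₂ : V) : List (V × V) :=
  [(s, a), (s, c), (a, b), (c, d), (b, s₁), (d, s₂), (t₂, a), (t₁, c), (b, t), (d, t)]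

variable {E E' : V → V → Prop} {s t a b c d s₁ t₁ s₂ t₂ u v : V}

theorem mem_extraEdges_of_adj
    (hfresh : ∀ u v, E u v → u ∉ extraNodes s t a b c d ∧ v ∉ extraNodes s t a b c d)
    (hE' : ∀ u v, E' u v ↔ E u v ∨ (u, v) ∈ extraEdges s t a b c d s₁ t₁ s₂ t₂)
    (huv : E' u v) (hW : u ∈ extraNodes s t a b c d ∨ v ∈ extraNodes s t a b c d) :
    (u, v) ∈ extraEdges s t a b c d s₁ t₁ s₂ t₂ :=
  ((hE' u v).1 huv).resolve_left fun h => by have := hfresh u v h; tauto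

theorem eq_a_of_mem_extraEdges_into_b (hnd : (extraNodes s t a b c d).Nodup)
    (hs₁ : s₁ ∉ extraNodes s t a b c d) (hs₂ : s₂ ∉ extraNodes s t a b c d)
    (h : (u, b) ∈ extraEdges s t a b c d s₁ t₁ s₂ t₂) : u = a := by
  simp only [extraEdges, extraNodes, List.mem_cons, Prod.mk.injEq, List.not_mem_nil,
    or_false, List.nodup_cons, not_or, List.nodup_nil] at h hnd hs₁ hs₂
  grind

theorem eq_c_of_mem_extraEdges_into_d (hnd : (extraNodes s t a b c d).Nodup)
    (hs₁ : s₁ ∉ extraNodes s t a b c d) (hs₂ : s₂ ∉ extraNodes s t a b c d)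
    (h : (u, d) ∈ extraEdges s t a b c d s₁ t₁ s₂ t₂) : u = c := by
  simp only [extraEdges, extraNodes, List.mem_cons, Prod.mk.injEq, List.not_mem_nil,
    or_false, List.nodup_cons, not_or, List.nodup_nil] at h hnd hs₁ hs₂
  grind

theorem eq_of_mem_extraEdges_of_fst_not_mem (h : (u, v) ∈ extraEdges s t a b c d s₁ t₁ s₂ t₂)
    (hu : u ∉ extraNodes s t a b c d) : u = t₂ ∧ v = a ∨ u = t₁ ∧ v = c := by
  simp only [extraEdges, extraNodes, List.mem_cons, Prod.mk.injEq, List.not_mem_nil,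
    or_false, not_or] at h hu
  grind

theorem eq_of_mem_extraEdges_of_snd_not_mem
    (h : (u, v) ∈ extraEdges s t a b c d s₁ t₁ s₂ t₂)
    (hv : v ∉ extraNodes s t a b c d) : u = b ∧ v = s₁ ∨ u = d ∧ v = s₂ := by
  simp only [extraEdges, extraNodes, List.mem_cons, Prod.mk.injEq, List.not_mem_nil,
    or_false, not_or] at h hv
  grind

end ReductionGraph

theorem reduction_must_exit_through_t₁c_general {V : Type*} (E : V → V → Prop)
    (s t a b c d s₁ t₁ s₂ t₂ : V)
    (hnd : ([s, t, a, b, c, d] : List V).Nodup)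
    (hfresh : ∀ u v, E u v →
      u ∉ ([s, t, a, b, c, d] : List V) ∧ v ∉ ([s, t, a, b, c, d] : List V))
    (hs₁ : s₁ ∉ ([s, t, a, b, c, d] : List V))
    (hs₂ : s₂ ∉ ([s, t, a, b, c, d] : List V)) (ht₂ : t₂ ∉ ([s, t, a, b, c, d] : List V))
    (E' : V → V → Prop)
    (hE' : ∀ u v, E' u v ↔ E u v ∨ (u, v) ∈
      ([(s, a), (s, c), (a, b), (c, d), (b, s₁), (d, s₂), (t₂, a), (t₁, c), (b, t), (d, t)] :
        List (V × V)))
    (l : List V) (hchain : l.Chain' E') (hnodup : l.Nodup)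
    (hhead : l.head? = some s) (hlast : l.getLast? = some t)
    (henter : (b, s₁) ∈ pathEdges l) :
    (t₁, c) ∈ pathEdges l ∧ (t₂, a) ∉ pathEdges l := by
  have hextra {u v} (huv : E' u v) (hW : u ∈ [s, t, a, b, c, d] ∨ v ∈ [s, t, a, b, c, d]) :=
    mem_extraEdges_of_adj hfresh hE' huv hW
  have hs : l[0]? = some s := List.head?_eq_getElem? ▸ hhead
  have ht : l[l.length - 1]? = some t := List.getLast?_eq_getElem? ▸ hlast
  have hsb : l[0]? ≠ some b := by simp [hs] at hnd ⊢; tauto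
  have hsd : l[0]? ≠ some d := by simp [hs] at hnd ⊢; tauto
  obtain ⟨m, hb, hs₁m⟩ := mem_pathEdges_iff.1 henter
  obtain ⟨m, rfl, ha⟩ := hchain.exists_getElem?_pred
    (fun u hu => eq_a_of_mem_extraEdges_into_b hnd hs₁ hs₂ (hextra hu (by simp))) hb hsb
  obtain ⟨k, u, v, hmk, -, hu, hv, hu', hv'⟩ := List.exists_getElem?_crossing
    (· ∈ [s, t, a, b, c, d]) (i := m + 2) (j := l.length - 1)
    (by have := (List.getElem?_eq_some_iff.1 hs₁m).1; omega) hs₁m hs₁ ht (by simp)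
  have hc : l[k]? = some t₁ ∧ l[k + 1]? = some c := by
    rcases eq_of_mem_extraEdges_of_fst_not_mem (hextra (hchain.rel_of_getElem? hu hv)
      (.inr hv')) hu' with ⟨rfl, rfl⟩ | ⟨rfl, rfl⟩
    · exact absurd (hnodup.eq_of_getElem?_eq_some hv ha) (by omega)
    · exact ⟨hu, hv⟩
  refine ⟨mem_pathEdges_iff.2 ⟨k, hc⟩, fun hexit => ?_⟩
  obtain ⟨i, ht₂i, hai⟩ := mem_pathEdges_iff.1 hexit
  have hi : i + 1 = m := hnodup.eq_of_getElem?_eq_some hai ha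
  obtain ⟨j, w, z, -, hji, hw, hz, hw', hz'⟩ := List.exists_getElem?_crossing
    (· ∉ [s, t, a, b, c, d]) (Nat.zero_le i) hs (by simp) ht₂i ht₂
  rcases eq_of_mem_extraEdges_of_snd_not_mem (hextra (hchain.rel_of_getElem? hw hz)
    (.inl (not_not.1 hw'))) hz' with ⟨rfl, rfl⟩ | ⟨rfl, rfl⟩
  · have := hnodup.eq_of_getElem?_eq_some hw hb
    omega
  · obtain ⟨j, rfl, hcj⟩ := hchain.exists_getElem?_pred
      (fun u hu => eq_c_of_mem_extraEdges_into_d hnd hs₁ hs₂ (hextra hu (by simp))) hw hsd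
    have := hnodup.eq_of_getElem?_eq_some hcj hc.2
    omega

/-- A simple `s–t` path in the reduction graph `G′` that enters `G` through
edge `(b,s₁)` must exit `G` through edge `(t₁,c)`: exiting through `(t₂,a)` would revisit
node `a` and thus create a cycle. -/
theorem reduction_must_exit_through_t₁c {V : Type*} (E : V → V → Prop)
    (s t a b c d s₁ t₁ s₂ t₂ : V)
    (hnd : ([s, t, a, b, c, d] : List V).Nodup)
    (hfresh : ∀ u v, E u v →
      u ∉ ([s, t, a, b, c, d] : List V) ∧ v ∉ ([s, t, a, b, c, d] : List V))
    (hs₁ : s₁ ∉ ([s, t, a, b, c, d] : List V)) (ht₁ : t₁ ∉ ([s, t, a, b, c, d] : List V))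
    (hs₂ : s₂ ∉ ([s, t, a, b, c, d] : List V)) (ht₂ : t₂ ∉ ([s, t, a, b, c, d] : List V))
    (E' : V → V → Prop)
    (hE' : ∀ u v, E' u v ↔ E u v ∨ (u, v) ∈
      ([(s, a), (s, c), (a, b), (c, d), (b, s₁), (d, s₂), (t₂, a), (t₁, c), (b, t), (d, t)] :
        List (V × V)))
    (l : List V) (hchain : l.Chain' E') (hnodup : l.Nodup)
    (hhead : l.head? = some s) (hlast : l.getLast? = some t)
    (henter : (b, s₁) ∈ pathEdges l) :
    (t₁, c) ∈ pathEdges l ∧ (t₂, a) ∉ pathEdges l :=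
  reduction_must_exit_through_t₁c_general E s t a b c d s₁ t₁ s₂ t₂ hnd hfresh hs₁ hs₂ ht₂ E' hE' l
    hchain hnodup hhead hlast henter
end
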